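/- arXiv:2511.08236 — 3 statements merged into one kernel-verified Lean document; each statement's English description precedes it below -/
import Mathlib

section
/- Let Θ ⊆ ℝᵖ be nonempty closed convex with diameter d := sup{‖a-b‖ : a,b ∈ Θ}. Consider θ̂_{k+1} = Π_Θ[θ̂_k + μ D_kᵀ(e_k + w_k)] with e_k := -D_k(θ̂_k - θ_k), θ_k, θ_{k+1} ∈ Θ, θ̂_k ∈ Θ, and μ‖D_k‖² ≤ 1. Then with φ_k := θ̂_k - θ_k and Δθ_k := θ_{k+1} - θ_k, it holds that ‖φ_{k+1}‖² - ‖φ_k‖² ≤ -μ‖e_k‖² + μ‖w_k‖² + 2d‖Δθ_k‖. -/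
/-!
Write `φ = θ̂ₖ - θₖ` and `z = θ̂ₖ + μ Dᵀ(e + w)`. Projecting onto the convex set `Θ` does not
increase the distance to the point `θₖ ∈ Θ`, so `‖θ̂ₖ₊₁ - θₖ‖² ≤ ‖z - θₖ‖²`. Expanding,
`‖z - θₖ‖² = ‖φ‖² - 2μ(‖e‖² + ⟪e, w⟫) + μ²‖Dᵀ(e + w)‖²`, and the step-size condition
`μ‖D‖² ≤ 1` bounds the last term by `μ‖e + w‖²`, which leaves `‖φ‖² - μ‖e‖² + μ‖w‖²`.
Finally, replacing `θₖ` by `θₖ₊₁` changes `‖θ̂ₖ₊₁ - ·‖²` by at most `2d‖θₖ₊₁ - θₖ‖`,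
since both distances lie in `[0, d]` and differ by at most `‖θₖ₊₁ - θₖ‖`.
-/

open scoped RealInnerProductSpace

section Projection

variable {F : Type*} [NormedAddCommGroup F] [InnerProductSpace ℝ F]

theorem Convex.real_inner_sub_le_zero_of_forall_norm_sub_le {K : Set F} (hK : Convex ℝ K)
    {z a : F} (ha : a ∈ K) (hmin : ∀ y ∈ K, ‖a - z‖ ≤ ‖y - z‖) {y : F} (hy : y ∈ K) :
    ⟪z - a, y - a⟫ ≤ 0 := by
  have : Nonempty K := ⟨⟨a, ha⟩⟩
  have hinf : ‖z - a‖ = ⨅ x : K, ‖z - x‖ :=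
    le_antisymm
      (le_ciInf fun x => by simpa only [norm_sub_rev] using hmin x x.2)
      (ciInf_le ⟨0, Set.forall_mem_range.mpr fun _ => norm_nonneg _⟩ (⟨a, ha⟩ : K))
  exact (norm_eq_iInf_iff_real_inner_le_zero hK ha).mp hinf y hy

theorem Convex.norm_sub_le_of_forall_norm_sub_le {K : Set F} (hK : Convex ℝ K)
    {z a : F} (ha : a ∈ K) (hmin : ∀ y ∈ K, ‖a - z‖ ≤ ‖y - z‖) {y : F} (hy : y ∈ K) :
    ‖a - y‖ ≤ ‖z - y‖ := by
  have hobtuse := hK.real_inner_sub_le_zero_of_forall_norm_sub_le ha hmin hy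
  have hexpand : ‖z - y‖ ^ 2 = ‖z - a‖ ^ 2 - 2 * ⟪z - a, y - a⟫ + ‖a - y‖ ^ 2 := by
    rw [show z - y = (z - a) - (y - a) by abel, norm_sub_sq_real, norm_sub_rev a y]
  exact pow_le_pow_iff_left₀ (norm_nonneg _) (norm_nonneg _) two_ne_zero |>.mp
    (by linarith [sq_nonneg ‖z - a‖])

end Projection

section GradientStep

variable {E F : Type*} [NormedAddCommGroup E] [InnerProductSpace ℝ E] [CompleteSpace E]
  [NormedAddCommGroup F] [InnerProductSpace ℝ F] [CompleteSpace F]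

theorem norm_smul_adjoint_sq_le (A : E →L[ℝ] F) {μ : ℝ} (hμ : 0 ≤ μ)
    (hstep : μ * ‖A‖ ^ 2 ≤ 1) (v : F) :
    ‖μ • (ContinuousLinearMap.adjoint A) v‖ ^ 2 ≤ μ * ‖v‖ ^ 2 := by
  have hnorm : ‖μ • (ContinuousLinearMap.adjoint A) v‖ ≤ μ * (‖A‖ * ‖v‖) := by
    rw [norm_smul, Real.norm_eq_abs, abs_of_nonneg hμ, ← ContinuousLinearMap.adjoint.norm_map A]
    exact mul_le_mul_of_nonneg_left ((ContinuousLinearMap.adjoint A).le_opNorm v) hμ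
  calc ‖μ • (ContinuousLinearMap.adjoint A) v‖ ^ 2 ≤ (μ * (‖A‖ * ‖v‖)) ^ 2 :=
        pow_le_pow_left₀ (norm_nonneg _) hnorm 2
    _ = μ * (μ * ‖A‖ ^ 2) * ‖v‖ ^ 2 := by ring
    _ ≤ μ * 1 * ‖v‖ ^ 2 := by gcongr
    _ = μ * ‖v‖ ^ 2 := by ring

theorem norm_add_smul_adjoint_sq_le (A : E →L[ℝ] F) {μ : ℝ} (hμ : 0 ≤ μ)
    (hstep : μ * ‖A‖ ^ 2 ≤ 1) {φ : E} {e : F} (he : e = -A φ) (w : F) :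
    ‖φ + μ • (ContinuousLinearMap.adjoint A) (e + w)‖ ^ 2 ≤
      ‖φ‖ ^ 2 - μ * ‖e‖ ^ 2 + μ * ‖w‖ ^ 2 := by
  have hcross : ⟪φ, μ • (ContinuousLinearMap.adjoint A) (e + w)⟫ = -μ * (‖e‖ ^ 2 + ⟪e, w⟫) := by
    subst he
    rw [real_inner_smul_right, ContinuousLinearMap.adjoint_inner_right, inner_add_right,
      inner_neg_left, inner_neg_right, real_inner_self_eq_norm_sq, norm_neg]
    ring
  have hstepsq := norm_smul_adjoint_sq_le A hμ hstep (e + w)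
  rw [norm_add_sq_real] at hstepsq
  rw [norm_add_sq_real, hcross]
  linarith

end GradientStep

theorem sq_norm_sub_sub_sq_norm_sub_le {G : Type*} [SeminormedAddCommGroup G] {a b c : G}
    {d : ℝ} (hb : ‖a - b‖ ≤ d) (hc : ‖a - c‖ ≤ d) :
    ‖a - c‖ ^ 2 - ‖a - b‖ ^ 2 ≤ 2 * d * ‖c - b‖ := by
  have hdiff : ‖a - c‖ - ‖a - b‖ ≤ ‖c - b‖ :=
    (norm_sub_norm_le _ _).trans_eq (by rw [sub_sub_sub_cancel_left, norm_sub_rev])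
  have hsum : 0 ≤ ‖a - c‖ + ‖a - b‖ := by positivity
  calc ‖a - c‖ ^ 2 - ‖a - b‖ ^ 2 = (‖a - c‖ - ‖a - b‖) * (‖a - c‖ + ‖a - b‖) := by ring
    _ ≤ ‖c - b‖ * (‖a - c‖ + ‖a - b‖) := mul_le_mul_of_nonneg_right hdiff hsum
    _ ≤ ‖c - b‖ * (2 * d) := by gcongr; linarith
    _ = 2 * d * ‖c - b‖ := by ring

theorem lms_lyapunov_decrease_general {n p : ℕ}
    (Θ : Set (EuclideanSpace ℝ (Fin p)))
    (hconv : Convex ℝ Θ)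
    (d : ℝ) (hd : ∀ a ∈ Θ, ∀ b ∈ Θ, ‖a - b‖ ≤ d)
    (proj : EuclideanSpace ℝ (Fin p) → EuclideanSpace ℝ (Fin p))
    (hproj : ∀ θ, proj θ ∈ Θ ∧ ∀ y ∈ Θ, ‖proj θ - θ‖ ≤ ‖y - θ‖)
    (D : EuclideanSpace ℝ (Fin p) →L[ℝ] EuclideanSpace ℝ (Fin n))
    (μ : ℝ) (hμ : 0 < μ) (hstep : μ * ‖D‖ ^ 2 ≤ 1)
    (θk θk1 θhatk : EuclideanSpace ℝ (Fin p))
    (hθk : θk ∈ Θ) (hθk1 : θk1 ∈ Θ)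
    (w : EuclideanSpace ℝ (Fin n))
    (e : EuclideanSpace ℝ (Fin n)) (he : e = -(D (θhatk - θk)))
    (θhatk1 : EuclideanSpace ℝ (Fin p))
    (hupd : θhatk1 = proj (θhatk + μ • (ContinuousLinearMap.adjoint D) (e + w))) :
    ‖θhatk1 - θk1‖ ^ 2 - ‖θhatk - θk‖ ^ 2 ≤
      -μ * ‖e‖ ^ 2 + μ * ‖w‖ ^ 2 + 2 * d * ‖θk1 - θk‖ := by
  set z := θhatk + μ • (ContinuousLinearMap.adjoint D) (e + w)
  obtain ⟨hmem, hmin⟩ := hproj z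
  rw [← hupd] at hmem hmin
  have hproject : ‖θhatk1 - θk‖ ≤ ‖z - θk‖ := hconv.norm_sub_le_of_forall_norm_sub_le hmem hmin hθk
  have hgradient : ‖z - θk‖ ^ 2 ≤ ‖θhatk - θk‖ ^ 2 - μ * ‖e‖ ^ 2 + μ * ‖w‖ ^ 2 := by
    rw [show z - θk = (θhatk - θk) + μ • (ContinuousLinearMap.adjoint D) (e + w) by
      simp only [z]; abel]
    exact norm_add_smul_adjoint_sq_le D hμ.le hstep he w
  have hdrift : ‖θhatk1 - θk1‖ ^ 2 - ‖θhatk1 - θk‖ ^ 2 ≤ 2 * d * ‖θk1 - θk‖ :=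
    sq_norm_sub_sub_sq_norm_sub_le (hd _ hmem _ hθk) (hd _ hmem _ hθk1)
  linarith [pow_le_pow_left₀ (norm_nonneg _) hproject 2]

theorem lms_lyapunov_decrease {n p : ℕ}
    (Θ : Set (EuclideanSpace ℝ (Fin p)))
    (hne : Θ.Nonempty) (hclosed : IsClosed Θ) (hconv : Convex ℝ Θ)
    (d : ℝ) (hd : ∀ a ∈ Θ, ∀ b ∈ Θ, ‖a - b‖ ≤ d)
    (proj : EuclideanSpace ℝ (Fin p) → EuclideanSpace ℝ (Fin p))
    (hproj : ∀ θ, proj θ ∈ Θ ∧ ∀ y ∈ Θ, ‖proj θ - θ‖ ≤ ‖y - θ‖)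
    (D : EuclideanSpace ℝ (Fin p) →L[ℝ] EuclideanSpace ℝ (Fin n))
    (μ : ℝ) (hμ : 0 < μ) (hstep : μ * ‖D‖ ^ 2 ≤ 1)
    (θk θk1 θhatk : EuclideanSpace ℝ (Fin p))
    (hθk : θk ∈ Θ) (hθk1 : θk1 ∈ Θ) (hθhatk : θhatk ∈ Θ)
    (w : EuclideanSpace ℝ (Fin n))
    (e : EuclideanSpace ℝ (Fin n)) (he : e = -(D (θhatk - θk)))
    (θhatk1 : EuclideanSpace ℝ (Fin p))
    (hupd : θhatk1 = proj (θhatk + μ • (ContinuousLinearMap.adjoint D) (e + w))) :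
    ‖θhatk1 - θk1‖ ^ 2 - ‖θhatk - θk‖ ^ 2 ≤
      -μ * ‖e‖ ^ 2 + μ * ‖w‖ ^ 2 + 2 * d * ‖θk1 - θk‖ :=
  lms_lyapunov_decrease_general Θ hconv d hd proj hproj D μ hμ hstep θk θk1 θhatk hθk hθk1 w e he
    θhatk1 hupd
end

section
/- Let P, Q, R, A, B, K be as in the LQR setting with P solving the Riccati equation and K the optimal gain, and suppose Q ⪰ q̲ I and P ⪯ p̄ I with q̲, p̄ > 0. Then for any ε > 0 and any x, e ∈ ℝⁿ (with x_+ := (A+BK)x + e): ‖x_+‖²_P - ‖x‖²_P ≤ -((1+ε)q̲ - ε p̄)‖x‖² + (1 + 1/ε) p̄ ‖e‖². -/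
/-!
Write `y = (A + BK)x`. The Riccati equation gives
`yᵀPy = xᵀPx - xᵀQx - (Kx)ᵀR(Kx) ≤ xᵀPx - q̲‖x‖²`. The perturbation `e`
enters only through the cross term `2yᵀPe`, which the weighted Young inequality
`2yᵀPe ≤ ε yᵀPy + ε⁻¹ eᵀPe` splits off; the bounds `P ⪯ p̄ I` then convert the remaining
`P`-norms into Euclidean ones.
-/

namespace Matrix

variable {ι κ : Type*}

lemma PosSemidef.isSymm_of_real {P : Matrix ι ι ℝ} (hP : P.PosSemidef) : P.IsSymm := by
  unfold IsSymm
  simpa [IsHermitian, conjTranspose_eq_transpose_of_trivial] using hP.isHermitian.eq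

variable [Fintype ι] [Fintype κ]

lemma dotProduct_transpose_mul_mul_mulVec {R : Type*} [CommSemiring R]
    (M : Matrix κ ι R) (N : Matrix κ κ R) (x : ι → R) :
    x ⬝ᵥ (Mᵀ * N * M) *ᵥ x = (M *ᵥ x) ⬝ᵥ N *ᵥ (M *ᵥ x) := by
  rw [← mulVec_mulVec, ← mulVec_mulVec, dotProduct_transpose_mulVec, dotProduct_comm]

lemma IsSymm.dotProduct_mulVec_comm {R : Type*} [CommSemiring R] {P : Matrix ι ι R}
    (hP : P.IsSymm) (x y : ι → R) : x ⬝ᵥ P *ᵥ y = y ⬝ᵥ P *ᵥ x := by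
  conv_lhs => rw [← hP.eq]
  exact dotProduct_transpose_mulVec P x y

lemma dotProduct_mulVec_closedLoop_of_riccati {R : Type*} [CommRing R]
    {P Q M : Matrix ι ι R} {W : Matrix κ κ R} {K : Matrix κ ι R}
    (hRic : P = Mᵀ * P * M + Q + Kᵀ * W * K) (x : ι → R) :
    (M *ᵥ x) ⬝ᵥ P *ᵥ (M *ᵥ x)
      = x ⬝ᵥ P *ᵥ x - x ⬝ᵥ Q *ᵥ x - (K *ᵥ x) ⬝ᵥ W *ᵥ (K *ᵥ x) := by
  conv_rhs => rw [hRic]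
  rw [add_mulVec, add_mulVec, dotProduct_add, dotProduct_add,
    dotProduct_transpose_mul_mul_mulVec, dotProduct_transpose_mul_mul_mulVec]
  ring

lemma PosSemidef.dotProduct_mulVec_nonneg' {P : Matrix ι ι ℝ} (hP : P.PosSemidef)
    (x : ι → ℝ) : 0 ≤ x ⬝ᵥ P *ᵥ x := by
  simpa using hP.dotProduct_mulVec_nonneg x

lemma dotProduct_mulVec_le_of_posSemidef_sub {M N : Matrix ι ι ℝ} (h : (M - N).PosSemidef)
    (x : ι → ℝ) : x ⬝ᵥ N *ᵥ x ≤ x ⬝ᵥ M *ᵥ x := by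
  simpa [sub_mulVec, dotProduct_sub] using PosSemidef.dotProduct_mulVec_nonneg' h x

lemma PosSemidef.two_mul_dotProduct_mulVec_le {P : Matrix ι ι ℝ} (hP : P.PosSemidef)
    {ε : ℝ} (hε : 0 < ε) (y e : ι → ℝ) :
    2 * (y ⬝ᵥ P *ᵥ e) ≤ ε * (y ⬝ᵥ P *ᵥ y) + 1 / ε * (e ⬝ᵥ P *ᵥ e) := by
  have hsq := hP.dotProduct_mulVec_nonneg' (ε • y - e)
  simp only [mulVec_sub, mulVec_smul, dotProduct_sub, sub_dotProduct, dotProduct_smul,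
    smul_dotProduct, smul_eq_mul, hP.isSymm_of_real.dotProduct_mulVec_comm e y] at hsq
  rw [← mul_le_mul_iff_of_pos_left hε, mul_add, ← mul_assoc ε (1 / ε),
    mul_one_div_cancel hε.ne', one_mul]
  linarith

lemma PosSemidef.dotProduct_mulVec_add_le {P : Matrix ι ι ℝ} (hP : P.PosSemidef)
    {ε : ℝ} (hε : 0 < ε) (y e : ι → ℝ) :
    (y + e) ⬝ᵥ P *ᵥ (y + e)
      ≤ (1 + ε) * (y ⬝ᵥ P *ᵥ y) + (1 + 1 / ε) * (e ⬝ᵥ P *ᵥ e) := by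
  have hexpand : (y + e) ⬝ᵥ P *ᵥ (y + e)
      = y ⬝ᵥ P *ᵥ y + 2 * (y ⬝ᵥ P *ᵥ e) + e ⬝ᵥ P *ᵥ e := by
    simp only [mulVec_add, dotProduct_add, add_dotProduct,
      hP.isSymm_of_real.dotProduct_mulVec_comm e y]
    ring
  linarith [hP.two_mul_dotProduct_mulVec_le hε y e]

end Matrix

open Matrix

theorem lqr_robust_decrease_general {n m : ℕ}
    (P Q : Matrix (Fin n) (Fin n) ℝ) (R : Matrix (Fin m) (Fin m) ℝ)
    (A : Matrix (Fin n) (Fin n) ℝ) (B : Matrix (Fin n) (Fin m) ℝ)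
    (K : Matrix (Fin m) (Fin n) ℝ)
    (hP : P.PosDef) (hR : R.PosDef)
    (hRic : P = (A + B * K)ᵀ * P * (A + B * K) + Q + Kᵀ * R * K)
    (q p : ℝ)
    (hQlb : (Q - q • (1 : Matrix (Fin n) (Fin n) ℝ)).PosSemidef)
    (hPub : ((p • (1 : Matrix (Fin n) (Fin n) ℝ)) - P).PosSemidef)
    (ε : ℝ) (hε : 0 < ε) (x e : Fin n → ℝ) (xp : Fin n → ℝ)
    (hxp : xp = (A + B * K) *ᵥ x + e) :
    xp ⬝ᵥ P *ᵥ xp - x ⬝ᵥ P *ᵥ x ≤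
      -((1 + ε) * q - ε * p) * (x ⬝ᵥ x) + (1 + 1 / ε) * p * (e ⬝ᵥ e) := by
  set y := (A + B * K) *ᵥ x
  have hQx : q * (x ⬝ᵥ x) ≤ x ⬝ᵥ Q *ᵥ x := by
    simpa [smul_mulVec] using dotProduct_mulVec_le_of_posSemidef_sub hQlb x
  have hPbound (v : Fin n → ℝ) : v ⬝ᵥ P *ᵥ v ≤ p * (v ⬝ᵥ v) := by
    simpa [smul_mulVec] using dotProduct_mulVec_le_of_posSemidef_sub hPub v
  have hdecrease : y ⬝ᵥ P *ᵥ y ≤ x ⬝ᵥ P *ᵥ x - q * (x ⬝ᵥ x) := by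
    rw [dotProduct_mulVec_closedLoop_of_riccati hRic]
    linarith [hR.posSemidef.dotProduct_mulVec_nonneg' (K *ᵥ x)]
  calc xp ⬝ᵥ P *ᵥ xp - x ⬝ᵥ P *ᵥ x
      ≤ (1 + ε) * (y ⬝ᵥ P *ᵥ y) + (1 + 1 / ε) * (e ⬝ᵥ P *ᵥ e) - x ⬝ᵥ P *ᵥ x := by
        rw [hxp]
        gcongr
        exact hP.posSemidef.dotProduct_mulVec_add_le hε y e
    _ ≤ (1 + ε) * (x ⬝ᵥ P *ᵥ x - q * (x ⬝ᵥ x)) + (1 + 1 / ε) * (p * (e ⬝ᵥ e))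
          - x ⬝ᵥ P *ᵥ x := by
        gcongr
        exact hPbound e
    _ = ε * (x ⬝ᵥ P *ᵥ x) - (1 + ε) * q * (x ⬝ᵥ x) + (1 + 1 / ε) * p * (e ⬝ᵥ e) := by ring
    _ ≤ ε * (p * (x ⬝ᵥ x)) - (1 + ε) * q * (x ⬝ᵥ x) + (1 + 1 / ε) * p * (e ⬝ᵥ e) := by
        gcongr
        exact hPbound x
    _ = -((1 + ε) * q - ε * p) * (x ⬝ᵥ x) + (1 + 1 / ε) * p * (e ⬝ᵥ e) := by ring

theorem lqr_robust_decrease {n m : ℕ}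
    (P Q : Matrix (Fin n) (Fin n) ℝ) (R : Matrix (Fin m) (Fin m) ℝ)
    (A : Matrix (Fin n) (Fin n) ℝ) (B : Matrix (Fin n) (Fin m) ℝ)
    (K : Matrix (Fin m) (Fin n) ℝ)
    (hP : P.PosDef) (hQ : Q.PosDef) (hR : R.PosDef)
    (hRic : P = (A + B * K)ᵀ * P * (A + B * K) + Q + Kᵀ * R * K)
    (q p : ℝ) (hq : 0 < q) (hp : 0 < p)
    (hQlb : (Q - q • (1 : Matrix (Fin n) (Fin n) ℝ)).PosSemidef)
    (hPub : ((p • (1 : Matrix (Fin n) (Fin n) ℝ)) - P).PosSemidef)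
    (ε : ℝ) (hε : 0 < ε) (x e : Fin n → ℝ) (xp : Fin n → ℝ)
    (hxp : xp = (A + B * K) *ᵥ x + e) :
    xp ⬝ᵥ P *ᵥ xp - x ⬝ᵥ P *ᵥ x ≤
      -((1 + ε) * q - ε * p) * (x ⬝ᵥ x) + (1 + 1 / ε) * p * (e ⬝ᵥ e) :=
  lqr_robust_decrease_general P Q R A B K hP hR hRic q p hQlb hPub ε hε x e xp hxp
end

section
/- Let M, N ∈ ℝ^{n×n} satisfy ‖Mⁱ‖ ≤ Cρⁱ and ‖Nⁱ‖ ≤ Cρⁱ for all i, with C > 0 and 0 ≤ ρ < 1. Then ∑_{j=0}^∞ ‖Mʲ - Nʲ‖² ≤ C⁴ ‖M-N‖² (1+ρ²)/(1-ρ²)³. -/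
open scoped Matrix.Norms.L2Operator

/-! The telescoping identity `Mʲ - Nʲ = ∑_{i<j} Mⁱ (M - N) N^{j-1-i}` and the power bounds give
`‖Mʲ - Nʲ‖ ≤ C² j ρ^{j-1} ‖M - N‖`; squaring, the series is dominated termwise by
`C⁴ ‖M - N‖² ∑ j² (ρ²)^{j-1} = C⁴ ‖M - N‖² (1 + ρ²) / (1 - ρ²)³`. -/

open Finset

-- `(k + 1)² = 2 (k + 2).choose 2 - (k + 1).choose 1` reduces this to two binomial series.
theorem hasSum_sq_mul_pow_pred_of_norm_lt_one {𝕜 : Type*} [NormedField 𝕜] [CompleteSpace 𝕜]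
    {x : 𝕜} (hx : ‖x‖ < 1) :
    HasSum (fun j : ℕ => (j : 𝕜) ^ 2 * x ^ (j - 1)) ((1 + x) / (1 - x) ^ 3) := by
  have hx1 : 1 - x ≠ 0 := sub_ne_zero.2 fun h => by simp [← h] at hx
  have hchoose := ((hasSum_choose_mul_geometric_of_norm_lt_one 2 hx).mul_left 2).sub
    (hasSum_choose_mul_geometric_of_norm_lt_one 1 hx)
  rw [← hasSum_nat_add_iff' 1]
  convert hchoose using 1
  · funext k
    have hnat : (k + 1) ^ 2 + (k + 1) = 2 * (k + 2).choose 2 := by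
      rw [Nat.choose_two_right, Nat.mul_div_cancel' (Nat.even_mul_pred_self _).two_dvd,
        Nat.add_sub_assoc one_le_two]
      ring
    have hcast := congrArg (Nat.cast : ℕ → 𝕜) hnat
    simp only [Nat.add_sub_cancel, Nat.choose_one_right]
    push_cast at hcast ⊢
    linear_combination x ^ k * hcast
  · simp only [range_one, sum_singleton, Nat.cast_zero]
    field_simp
    ring

theorem pow_sub_pow_eq_sum {R : Type*} [Ring R] (M N : R) (j : ℕ) :
    M ^ j - N ^ j = ∑ i ∈ range j, M ^ i * (M - N) * N ^ (j - 1 - i) := by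
  induction j with
  | zero => simp
  | succ j ih =>
    have hshift : ∑ i ∈ range j, M ^ i * (M - N) * N ^ (j - i) = (M ^ j - N ^ j) * N := by
      rw [ih, sum_mul]
      refine sum_congr rfl fun i hi => ?_
      rw [mul_assoc _ _ N, ← pow_succ, show j - 1 - i + 1 = j - i by grind]
    rw [sum_range_succ, Nat.add_sub_cancel, Nat.sub_self, pow_zero, mul_one, hshift,
      pow_succ, pow_succ]
    noncomm_ring

theorem norm_pow_sub_pow_le {R : Type*} [NormedRing R] {M N : R} {C ρ : ℝ}
    (hM : ∀ i, ‖M ^ i‖ ≤ C * ρ ^ i) (hN : ∀ i, ‖N ^ i‖ ≤ C * ρ ^ i) (j : ℕ) :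
    ‖M ^ j - N ^ j‖ ≤ C ^ 2 * j * ρ ^ (j - 1) * ‖M - N‖ := by
  have hterm : ∀ i ∈ range j,
      ‖M ^ i * (M - N) * N ^ (j - 1 - i)‖ ≤ C ^ 2 * ρ ^ (j - 1) * ‖M - N‖ := by
    intro i hi
    have hpow : ρ ^ i * ρ ^ (j - 1 - i) = ρ ^ (j - 1) := by
      rw [← pow_add, Nat.add_sub_cancel' (by grind)]
    calc ‖M ^ i * (M - N) * N ^ (j - 1 - i)‖
        ≤ ‖M ^ i‖ * ‖M - N‖ * ‖N ^ (j - 1 - i)‖ := norm_mul₃_le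
      _ ≤ C * ρ ^ i * ‖M - N‖ * (C * ρ ^ (j - 1 - i)) := by
        gcongr
        · exact mul_nonneg ((norm_nonneg _).trans (hM i)) (norm_nonneg _)
        · exact hM i
        · exact hN _
      _ = C ^ 2 * ρ ^ (j - 1) * ‖M - N‖ := by rw [← hpow]; ring
  calc ‖M ^ j - N ^ j‖ ≤ ∑ _i ∈ range j, C ^ 2 * ρ ^ (j - 1) * ‖M - N‖ := by
        rw [pow_sub_pow_eq_sum]
        exact norm_sum_le_of_le _ hterm
    _ = C ^ 2 * j * ρ ^ (j - 1) * ‖M - N‖ := by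
        rw [sum_const, card_range, nsmul_eq_mul]
        ring

theorem power_diff_sq_summable_bound_general {n : ℕ}
    (M N : Matrix (Fin n) (Fin n) ℝ)
    (C ρ : ℝ) (hρ0 : 0 ≤ ρ) (hρ1 : ρ < 1)
    (hM : ∀ i : ℕ, ‖M ^ i‖ ≤ C * ρ ^ i) (hN : ∀ i : ℕ, ‖N ^ i‖ ≤ C * ρ ^ i) :
    (Summable fun j : ℕ => ‖M ^ j - N ^ j‖ ^ 2) ∧
      ∑' j : ℕ, ‖M ^ j - N ^ j‖ ^ 2 ≤
        C ^ 4 * ‖M - N‖ ^ 2 * (1 + ρ ^ 2) / (1 - ρ ^ 2) ^ 3 := by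
  have hρ2 : ‖ρ ^ 2‖ < 1 := by
    rw [norm_pow, Real.norm_of_nonneg hρ0]
    exact pow_lt_one₀ hρ0 hρ1 two_ne_zero
  have hseries := (hasSum_sq_mul_pow_pred_of_norm_lt_one hρ2).mul_left (C ^ 4 * ‖M - N‖ ^ 2)
  have hbound (j : ℕ) :
      ‖M ^ j - N ^ j‖ ^ 2 ≤ C ^ 4 * ‖M - N‖ ^ 2 * ((j : ℝ) ^ 2 * (ρ ^ 2) ^ (j - 1)) :=
    calc ‖M ^ j - N ^ j‖ ^ 2 ≤ (C ^ 2 * j * ρ ^ (j - 1) * ‖M - N‖) ^ 2 :=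
          pow_le_pow_left₀ (norm_nonneg _) (norm_pow_sub_pow_le hM hN j) 2
      _ = _ := by ring
  have hsummable := hseries.summable.of_nonneg_of_le (fun j => sq_nonneg _) hbound
  refine ⟨hsummable, ?_⟩
  calc ∑' j : ℕ, ‖M ^ j - N ^ j‖ ^ 2
      ≤ ∑' j : ℕ, C ^ 4 * ‖M - N‖ ^ 2 * ((j : ℝ) ^ 2 * (ρ ^ 2) ^ (j - 1)) :=
        hsummable.tsum_le_tsum hbound hseries.summable
    _ = C ^ 4 * ‖M - N‖ ^ 2 * (1 + ρ ^ 2) / (1 - ρ ^ 2) ^ 3 := by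
        rw [hseries.tsum_eq]
        ring

theorem power_diff_sq_summable_bound {n : ℕ}
    (M N : Matrix (Fin n) (Fin n) ℝ)
    (C ρ : ℝ) (hC : 0 < C) (hρ0 : 0 ≤ ρ) (hρ1 : ρ < 1)
    (hM : ∀ i : ℕ, ‖M ^ i‖ ≤ C * ρ ^ i) (hN : ∀ i : ℕ, ‖N ^ i‖ ≤ C * ρ ^ i) :
    (Summable fun j : ℕ => ‖M ^ j - N ^ j‖ ^ 2) ∧
      ∑' j : ℕ, ‖M ^ j - N ^ j‖ ^ 2 ≤
        C ^ 4 * ‖M - N‖ ^ 2 * (1 + ρ ^ 2) / (1 - ρ ^ 2) ^ 3 :=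
  power_diff_sq_summable_bound_general M N C ρ hρ0 hρ1 hM hN
end
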